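/- arXiv:1207.0572 — 2 statements merged into one kernel-verified Lean document; each statement's English description precedes it below -/
import Mathlib

section
/- Let A, B, X, Y, Z be five points on the 2-sphere, no three lying on a common great circle and no two antipodal. If the geodesic edge AX crosses BY, and AZ crosses BX, then AZ crosses BY. -/
/-!
A crossing of the edges `AX` and `BY` amounts to a positive linear relation
`a A + b X = c B + d Y`. Given such relations for `AX, BY` and for `AZ, BX`, a positive
combination of the two eliminates `X` and leaves a positive relation between `A, Z` and
`B, Y`: this is circuit elimination in the oriented matroid of the five vectors.
-/

noncomputable section

/-- Points of `ℝ³`. -/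
abbrev E3 := EuclideanSpace ℝ (Fin 3)

/-- The interior of the shortest geodesic arc joining `X` and `Y` on the unit
sphere: normalizations of strictly positive combinations of `X` and `Y`. -/
def ArcInt (X Y : E3) : Set E3 :=
  {z | ∃ a b : ℝ, 0 < a ∧ 0 < b ∧ z = ‖a • X + b • Y‖⁻¹ • (a • X + b • Y)}

/-- Two geodesic edges `XY` and `ZW` cross if they share a point interior to both. -/
def Crosses (X Y Z W : E3) : Prop := (ArcInt X Y ∩ ArcInt Z W).Nonempty

/-- Here `u` or `v` may vanish: normalizing `0` gives `0`, which forces the other to vanish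
as well. -/
theorem exists_pos_smul_eq_of_inv_norm_smul_eq {E : Type*} [NormedAddCommGroup E]
    [NormedSpace ℝ E] {u v : E} (h : ‖u‖⁻¹ • u = ‖v‖⁻¹ • v) :
    ∃ r s : ℝ, 0 < r ∧ 0 < s ∧ r • u = s • v := by
  have hiff : u = 0 ↔ v = 0 := by
    constructor <;> rintro rfl <;> simpa [eq_comm] using h
  by_cases hu : u = 0
  · exact ⟨1, 1, one_pos, one_pos, by rw [hu, hiff.1 hu]⟩
  · exact (sameRay_iff_inv_norm_smul_eq.2 (Or.inr (Or.inr h))).exists_pos hu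
      (mt hiff.2 hu)

theorem crosses_iff {X Y Z W : E3} :
    Crosses X Y Z W ↔ ∃ a b c d : ℝ, 0 < a ∧ 0 < b ∧ 0 < c ∧ 0 < d ∧
      a • X + b • Y = c • Z + d • W := by
  constructor
  · rintro ⟨_, ⟨a, b, ha, hb, rfl⟩, ⟨c, d, hc, hd, h⟩⟩
    obtain ⟨r, s, hr, hs, hrs⟩ := exists_pos_smul_eq_of_inv_norm_smul_eq h
    refine ⟨r * a, r * b, s * c, s * d, by positivity, by positivity, by positivity,
      by positivity, ?_⟩
    linear_combination (norm := module) hrs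
  · rintro ⟨a, b, c, d, ha, hb, hc, hd, h⟩
    exact ⟨_, ⟨a, b, ha, hb, rfl⟩, ⟨c, d, hc, hd, by rw [h]⟩⟩

theorem crossing_transfer_general (p : Fin 5 → E3)
    (h1 : Crosses (p 0) (p 2) (p 1) (p 3))
    (h2 : Crosses (p 0) (p 4) (p 1) (p 2)) :
    Crosses (p 0) (p 4) (p 1) (p 3) := by
  obtain ⟨a₁, b₁, c₁, d₁, ha₁, hb₁, hc₁, hd₁, h₁⟩ := crosses_iff.1 h1
  obtain ⟨a₂, b₂, c₂, d₂, ha₂, hb₂, hc₂, hd₂, h₂⟩ := crosses_iff.1 h2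
  refine crosses_iff.2 ⟨d₂ * a₁ + b₁ * a₂, b₁ * b₂, d₂ * c₁ + b₁ * c₂, d₂ * d₁,
    by positivity, by positivity, by positivity, by positivity, ?_⟩
  linear_combination (norm := module) d₂ • h₁ + b₁ • h₂

/-- Let `A = p 0`, `B = p 1`, `X = p 2`, `Y = p 3`, `Z = p 4` be five points on the
unit sphere, no three on a common great circle (so in particular pairwise distinct
and non-antipodal).  If the geodesic edge `AX` crosses `BY` and `AZ` crosses `BX`,
then `AZ` crosses `BY`. -/
theorem crossing_transfer (p : Fin 5 → E3)
    (hUnit : ∀ i, ‖p i‖ = 1)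
    (hGP : ∀ i j k : Fin 5, i ≠ j → i ≠ k → j ≠ k →
      LinearIndependent ℝ ![p i, p j, p k])
    (h1 : Crosses (p 0) (p 2) (p 1) (p 3))
    (h2 : Crosses (p 0) (p 4) (p 1) (p 2)) :
    Crosses (p 0) (p 4) (p 1) (p 3) :=
  crossing_transfer_general p h1 h2

end
end

section
/- Suppose K_{3,3} is geodesically immersed in the 2-sphere with exactly 7 crossings, and the adjacent edges 12 and 14 each have no crossings. Then at least one of the edges 36 or 56 also has no crossings. -/
open scoped Classical

noncomputable section

/-- Vertices of `K₃,₃`: indices `0,2,4` form one part (labels `1,3,5`). -/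
def oI : Fin 3 → Fin 6 := ![0, 2, 4]

/-- Indices `1,3,5` form the other part (labels `2,4,6`). -/
def eI : Fin 3 → Fin 6 := ![1, 3, 5]

/-- A geodesic immersion of `K₃,₃` in the unit sphere: all vertices are unit
vectors and no three of them lie on a common great circle. -/
def GoodImm (v : Fin 6 → E3) : Prop :=
  (∀ i, ‖v i‖ = 1) ∧
    ∀ i j k : Fin 6, i ≠ j → i ≠ k → j ≠ k → LinearIndependent ℝ ![v i, v j, v k]

/-- The number of crossings of the immersion: the number of unordered pairs of
disjoint edges whose geodesic arcs cross.  An edge is a pair `(a, b)`, joining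
vertex `oI a` to vertex `eI b`. -/
def crossingCount (v : Fin 6 → E3) : ℕ :=
  (Finset.univ.filter fun p : (Fin 3 × Fin 3) × (Fin 3 × Fin 3) =>
    p.1.1 < p.2.1 ∧ p.1.2 ≠ p.2.2 ∧
      Crosses (v (oI p.1.1)) (v (eI p.1.2)) (v (oI p.2.1)) (v (eI p.2.2))).card

/-- The edge `(a,b)` of `K₃,₃` has no crossings with any other edge. -/
def EdgeFree (v : Fin 6 → E3) (p : Fin 3 × Fin 3) : Prop :=
  ∀ q : Fin 3 × Fin 3, q ≠ p →
    ¬ Crosses (v (oI p.1)) (v (eI p.2)) (v (oI q.1)) (v (eI q.2))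

/-!
Write `[XYZ]` for the determinant of `X, Y, Z`. If the arcs `XY` and `ZW` cross, then
`a X + b Y = c Z + d W` with `a, b, c, d > 0`; applying `[P Q ·]` to this identity for two of
the four points shows that `X` and `W` lie on the same side of the great circle `YZ`, and that the
great circle `ZW` separates `X` from `Y`.
So the two pairs of opposite edges of a 4-cycle never both cross, and the crossing pairs inject
into the nine 4-cycles of `K₃,₃`. The cycles `1234` and `1254` carry no crossing because `12` and
`14` are free, so with 7 crossings every other cycle carries one; in `1256` and `1456` these must
be `16 × 52` and `16 × 54`. If `36` crossed `5x` and `56` crossed `3y` (`x, y ∈ {2, 4}`), then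
`1`, `x`, `y` and `3` would all lie on one side of the great circle `56`, while `3y × 56` puts `3`
and `y` on opposite sides.
-/

theorem norm_smul_inv_norm_smul {F : Type*} [NormedAddCommGroup F] [Module ℝ F] (u : F) :
    ‖u‖ • ‖u‖⁻¹ • u = u := by
  rcases eq_or_ne u 0 with rfl | hu
  · simp
  · exact smul_inv_smul₀ (norm_ne_zero_iff.2 hu) u

theorem sign_eq_sign_of_pos_mul_eq {α : Type*} [Ring α] [LinearOrder α] [IsStrictOrderedRing α]
    {a b x y : α} (ha : 0 < a) (hb : 0 < b) (h : a * x = b * y) :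
    SignType.sign x = SignType.sign y := by
  simpa [sign_mul, sign_pos ha, sign_pos hb] using congrArg SignType.sign h

def det3 (X Y Z : E3) : ℝ :=
  X 0 * (Y 1 * Z 2 - Y 2 * Z 1) - X 1 * (Y 0 * Z 2 - Y 2 * Z 0) + X 2 * (Y 0 * Z 1 - Y 1 * Z 0)

section Determinant

variable (P Q X Y : E3)

theorem det3_smul_add_smul (a b : ℝ) :
    det3 P Q (a • X + b • Y) = a * det3 P Q X + b * det3 P Q Y := by
  simp only [det3, PiLp.add_apply, PiLp.smul_apply, smul_eq_mul]
  ring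

theorem det3_self_left : det3 P Q P = 0 := by
  simp only [det3]
  ring

theorem det3_self_right : det3 P Q Q = 0 := by
  simp only [det3]
  ring

theorem det3_swap : det3 Q P X = -det3 P Q X := by
  simp only [det3]
  ring

end Determinant

theorem det3_ne_zero_of_linearIndependent {X Y Z : E3} (h : LinearIndependent ℝ ![X, Y, Z]) :
    det3 X Y Z ≠ 0 := by
  set A : Matrix (Fin 3) (Fin 3) ℝ := Matrix.of fun i => WithLp.ofLp (![X, Y, Z] i)
  have hA : LinearIndependent ℝ A.row :=
    h.map' (WithLp.linearEquiv 2 ℝ (Fin 3 → ℝ)).toLinearMap (LinearEquiv.ker _)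
  have hdet :=
    ((Matrix.isUnit_iff_isUnit_det A).1 (Matrix.linearIndependent_rows_iff_isUnit.1 hA)).ne_zero
  rw [Matrix.det_fin_three] at hdet
  convert hdet using 1
  simp [A, det3]
  ring

section Crossing

variable {X Y Z W : E3}

theorem Crosses.symm (h : Crosses X Y Z W) : Crosses Z W X Y := by
  obtain ⟨z, hXY, hZW⟩ := h
  exact ⟨z, hZW, hXY⟩

theorem Crosses.exists_smul_add_smul_eq (h : Crosses X Y Z W) :
    ∃ a b c d : ℝ, 0 < a ∧ 0 < b ∧ 0 < c ∧ 0 < d ∧ a • X + b • Y = c • Z + d • W := by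
  obtain ⟨z, ⟨a, b, ha, hb, rfl⟩, ⟨c, d, hc, hd, hz⟩⟩ := h
  set u := a • X + b • Y
  set w := c • Z + d • W
  have hzero : u = 0 ↔ w = 0 := by simpa using congrArg (· = 0) hz
  by_cases hu : u = 0
  · exact ⟨a, b, c, d, ha, hb, hc, hd, hu.trans (hzero.1 hu).symm⟩
  have hw : w ≠ 0 := mt hzero.2 hu
  have huw : ‖w‖ • u = ‖u‖ • w := by
    calc ‖w‖ • u = ‖w‖ • ‖u‖ • ‖u‖⁻¹ • u := by rw [norm_smul_inv_norm_smul]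
      _ = ‖u‖ • ‖w‖ • ‖w‖⁻¹ • w := by rw [hz, smul_comm ‖w‖ ‖u‖]
      _ = ‖u‖ • w := by rw [norm_smul_inv_norm_smul]
  refine ⟨‖w‖ * a, ‖w‖ * b, ‖u‖ * c, ‖u‖ * d, by positivity, by positivity, by positivity,
    by positivity, ?_⟩
  simpa only [mul_smul, ← smul_add] using huw

theorem Crosses.sign_det3_eq (h : Crosses X Y Z W) :
    SignType.sign (det3 Y Z X) = SignType.sign (det3 Y Z W) := by
  obtain ⟨a, b, c, d, ha, -, -, hd, e⟩ := h.exists_smul_add_smul_eq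
  have := congrArg (det3 Y Z) e
  simp only [det3_smul_add_smul, det3_self_left, det3_self_right, mul_zero, add_zero,
    zero_add] at this
  exact sign_eq_sign_of_pos_mul_eq ha hd this

theorem Crosses.sign_det3_eq_neg (h : Crosses X Y Z W) :
    SignType.sign (det3 Z W X) = -SignType.sign (det3 Z W Y) := by
  obtain ⟨a, b, c, d, ha, hb, -, -, e⟩ := h.exists_smul_add_smul_eq
  have := congrArg (det3 Z W) e
  simp only [det3_smul_add_smul, det3_self_left, det3_self_right, mul_zero, add_zero] at this
  rw [← Left.sign_neg]
  exact sign_eq_sign_of_pos_mul_eq ha hb (by linarith)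

theorem Crosses.det3_eq_zero_of_common_start (h : Crosses X Y X W) : det3 Y X W = 0 := by
  simpa [det3_self_right] using h.sign_det3_eq.symm

theorem Crosses.det3_eq_zero_of_common_end (h : Crosses X Y Z Y) : det3 Z Y X = 0 := by
  simpa [det3_self_right] using h.sign_det3_eq_neg

theorem Crosses.det3_eq_zero_of_crosses_swap (h : Crosses X Y Z W) (h' : Crosses X W Z Y) :
    det3 Z W Y = 0 := by
  have hsame := h'.sign_det3_eq
  rw [det3_swap Z W, det3_swap Z W, Left.sign_neg, Left.sign_neg, neg_inj,
    h.sign_det3_eq_neg, SignType.neg_eq_self_iff] at hsame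
  exact sign_eq_zero_iff.1 hsame

theorem det3_eq_zero_of_four_crossings {P Q O M A B : E3} (hPA : Crosses P O M A)
    (hPB : Crosses P O M B) (hQA : Crosses Q O M A) (hQB : Crosses Q B M O) :
    det3 O M B = 0 := by
  have hsep := hQB.sign_det3_eq_neg
  rw [det3_swap O M, det3_swap O M, Left.sign_neg, Left.sign_neg, neg_inj,
    hQA.sign_det3_eq, ← hPA.sign_det3_eq, hPB.sign_det3_eq, eq_comm, SignType.neg_eq_self_iff]
    at hsep
  exact sign_eq_zero_iff.1 hsep

end Crossing

section K33

open Finset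

variable {v : Fin 6 → E3}

theorem oI_ne_eI (a b : Fin 3) : oI a ≠ eI b := by
  revert a b
  decide

theorem oI_injective : Function.Injective oI := by
  decide

theorem eI_injective : Function.Injective eI := by
  decide

theorem GoodImm.det3_ne_zero (hv : GoodImm v) {i j k : Fin 6} (hij : i ≠ j) (hik : i ≠ k)
    (hjk : j ≠ k) : det3 (v i) (v j) (v k) ≠ 0 :=
  det3_ne_zero_of_linearIndependent (hv.2 i j k hij hik hjk)

theorem exists_crosses_of_not_edgeFree (hv : GoodImm v) {e : Fin 3 × Fin 3}
    (h : ¬ EdgeFree v e) : ∃ f : Fin 3 × Fin 3, f.1 ≠ e.1 ∧ f.2 ≠ e.2 ∧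
      Crosses (v (oI e.1)) (v (eI e.2)) (v (oI f.1)) (v (eI f.2)) := by
  simp only [EdgeFree, not_forall, not_not] at h
  obtain ⟨f, hfe, hf⟩ := h
  refine ⟨f, fun h1 => ?_, fun h2 => ?_, hf⟩
  · have h2 : f.2 ≠ e.2 := fun h2 => hfe (Prod.ext h1 h2)
    rw [h1] at hf
    exact hv.det3_ne_zero (oI_ne_eI _ _).symm (eI_injective.ne h2.symm) (oI_ne_eI _ _)
      hf.det3_eq_zero_of_common_start
  · have h1 : f.1 ≠ e.1 := fun h1 => hfe (Prod.ext h1 h2)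
    rw [h2] at hf
    exact hv.det3_ne_zero (oI_ne_eI _ _) (fun h => h1 (oI_injective h)) (oI_ne_eI _ _).symm
      hf.det3_eq_zero_of_common_end

theorem edgeFree_zero (h12 : EdgeFree v (0, 0)) (h14 : EdgeFree v (0, 1)) {d : Fin 3}
    (hd : d ≠ 2) : EdgeFree v (0, d) := by
  fin_cases d
  exacts [h12, h14, absurd rfl hd]

theorem exists_crosses_of_not_edgeFree_of_ne_zero (hv : GoodImm v) (h12 : EdgeFree v (0, 0))
    (h14 : EdgeFree v (0, 1)) {a c : Fin 3} (ha : a ≠ 0) (hc : c ≠ 0) (hac : a ≠ c)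
    (h : ¬ EdgeFree v (a, 2)) :
    ∃ d ≠ 2, Crosses (v (oI a)) (v (eI 2)) (v (oI c)) (v (eI d)) := by
  obtain ⟨⟨c', d⟩, hc'a, hd, hx⟩ := exists_crosses_of_not_edgeFree hv h
  simp only at hc'a hd
  obtain rfl | rfl : c' = 0 ∨ c' = c := by omega
  · exact absurd hx.symm (edgeFree_zero h12 h14 hd (a, 2) (by simp [ha]))
  · exact ⟨d, hd, hx⟩

def crossingPairs (v : Fin 6 → E3) : Finset ((Fin 3 × Fin 3) × (Fin 3 × Fin 3)) :=
  Finset.univ.filter fun p => p.1.1 < p.2.1 ∧ p.1.2 ≠ p.2.2 ∧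
    Crosses (v (oI p.1.1)) (v (eI p.1.2)) (v (oI p.2.1)) (v (eI p.2.2))

theorem mem_crossingPairs {p : (Fin 3 × Fin 3) × (Fin 3 × Fin 3)} :
    p ∈ crossingPairs v ↔ p.1.1 < p.2.1 ∧ p.1.2 ≠ p.2.2 ∧
      Crosses (v (oI p.1.1)) (v (eI p.1.2)) (v (oI p.2.1)) (v (eI p.2.2)) := by
  simp [crossingPairs]

theorem not_edgeFree_fst_of_mem_crossingPairs {p : (Fin 3 × Fin 3) × (Fin 3 × Fin 3)}
    (hp : p ∈ crossingPairs v) : ¬ EdgeFree v p.1 := fun he =>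
  have ⟨hlt, _, hx⟩ := mem_crossingPairs.1 hp
  he p.2 (fun h => hlt.ne (congrArg Prod.fst h).symm) hx

/-- The 4-cycle through the disjoint edges `(a, b)` and `(c, d)`, encoded by the vertices
`oI (-(a + c))` and `eI (-(b + d))` it misses: in `Fin 3`, `-(a + c)` is the index other than
`a` and `c`. -/
def cycleOf (p : (Fin 3 × Fin 3) × (Fin 3 × Fin 3)) : Fin 3 × Fin 3 :=
  (-(p.1.1 + p.2.1), -(p.1.2 + p.2.2))

def opposite (p : (Fin 3 × Fin 3) × (Fin 3 × Fin 3)) : (Fin 3 × Fin 3) × (Fin 3 × Fin 3) :=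
  ((p.1.1, p.2.2), (p.2.1, p.1.2))

theorem eq_or_eq_opposite_of_cycleOf_eq {p q : (Fin 3 × Fin 3) × (Fin 3 × Fin 3)}
    (hp : p.1.1 < p.2.1) (hp' : p.1.2 ≠ p.2.2) (hq : q.1.1 < q.2.1) (hq' : q.1.2 ≠ q.2.2)
    (h : cycleOf p = cycleOf q) : p = q ∨ p = opposite q := by
  obtain ⟨⟨a, b⟩, c, d⟩ := p
  obtain ⟨⟨a', b'⟩, c', d'⟩ := q
  simp only [cycleOf, opposite, Prod.mk.injEq, neg_inj] at *
  omega

theorem GoodImm.injOn_cycleOf (hv : GoodImm v) : Set.InjOn cycleOf (crossingPairs v) := by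
  intro p hp q hq hpq
  obtain ⟨hp1, hp2, hpx⟩ := mem_crossingPairs.1 hp
  obtain ⟨hq1, hq2, hqx⟩ := mem_crossingPairs.1 hq
  rcases eq_or_eq_opposite_of_cycleOf_eq hp1 hp2 hq1 hq2 hpq with h | rfl
  · exact h
  · exact absurd (hqx.det3_eq_zero_of_crosses_swap hpx)
      (hv.det3_ne_zero (oI_ne_eI _ _) (oI_ne_eI _ _) (eI_injective.ne hq2.symm))

theorem GoodImm.crossingCount_add_card_le (hv : GoodImm v) {s : Finset (Fin 3 × Fin 3)}
    (hs : ∀ p ∈ crossingPairs v, cycleOf p ∉ s) : crossingCount v + #s ≤ 9 := by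
  have hdisj : Disjoint ((crossingPairs v).image cycleOf) s := by
    rw [disjoint_left]
    rintro _ hc
    obtain ⟨p, hp, rfl⟩ := mem_image.1 hc
    exact hs p hp
  calc crossingCount v + #s = #((crossingPairs v).image cycleOf ∪ s) := by
        rw [card_union_of_disjoint hdisj, card_image_of_injOn hv.injOn_cycleOf]
        rfl
    _ ≤ 9 := by simpa using card_le_univ ((crossingPairs v).image cycleOf ∪ s)

theorem crosses_of_crossingCount_eq_seven (hv : GoodImm v) (h7 : crossingCount v = 7)
    (h12 : EdgeFree v (0, 0)) (h14 : EdgeFree v (0, 1)) {d : Fin 3} (hd : d ≠ 2) :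
    Crosses (v (oI 0)) (v (eI 2)) (v (oI 2)) (v (eI d)) := by
  by_contra hC
  have hle := hv.crossingCount_add_card_le
    (s := {cycleOf ((0, 0), (1, 1)), cycleOf ((0, 0), (2, 1)), cycleOf ((0, 2), (2, d))}) ?_
  · rw [h7] at hle
    obtain rfl | rfl : d = 0 ∨ d = 1 := by omega
    all_goals exact absurd hle (by decide)
  intro p hp hmem
  obtain ⟨hp1, hp2, hpx⟩ := mem_crossingPairs.1 hp
  have hfst := not_edgeFree_fst_of_mem_crossingPairs hp
  simp only [mem_insert, mem_singleton] at hmem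
  rcases hmem with h | h | h
  · rcases eq_or_eq_opposite_of_cycleOf_eq hp1 hp2 (by decide) (by decide) h with rfl | rfl
    exacts [hfst h12, hfst h14]
  · rcases eq_or_eq_opposite_of_cycleOf_eq hp1 hp2 (by decide) (by decide) h with rfl | rfl
    exacts [hfst h12, hfst h14]
  · rcases eq_or_eq_opposite_of_cycleOf_eq hp1 hp2 (by simp) hd.symm h with rfl | rfl
    exacts [hC hpx, hfst (edgeFree_zero h12 h14 hd)]

end K33

/-- If `K₃,₃` is geodesically immersed in the sphere with exactly 7 crossings and
the adjacent edges `12` (edge `(0,0)`) and `14` (edge `(0,1)`) each have no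
crossings, then edge `36` (edge `(1,2)`) or edge `56` (edge `(2,2)`) also has no
crossings. -/
theorem K33_seven_crossings_adjacent_free (v : Fin 6 → E3) (h : GoodImm v)
    (h7 : crossingCount v = 7)
    (h12 : EdgeFree v (0, 0)) (h14 : EdgeFree v (0, 1)) :
    EdgeFree v (1, 2) ∨ EdgeFree v (2, 2) := by
  by_contra! ⟨h36, h56⟩
  obtain ⟨d, hd, h36x⟩ := exists_crosses_of_not_edgeFree_of_ne_zero h h12 h14 (a := 1) (c := 2)
    (by decide) (by decide) (by decide) h36
  obtain ⟨d', hd', h56x⟩ := exists_crosses_of_not_edgeFree_of_ne_zero h h12 h14 (a := 2) (c := 1)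
    (by decide) (by decide) (by decide) h56
  have h16 := crosses_of_crossingCount_eq_seven h h7 h12 h14 hd
  have h16' := crosses_of_crossingCount_eq_seven h h7 h12 h14 hd'
  exact h.det3_ne_zero (oI_ne_eI _ _).symm (eI_injective.ne hd'.symm) (oI_ne_eI _ _)
    (det3_eq_zero_of_four_crossings h16 h16' h36x h56x.symm)

end
end
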